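/- Let φ(x) = x/(1+x) and let Z be the operator (Zg)(x) = φ(x)·g′(x) on smooth functions on (0,∞). For every integer n ≥ 1 there exists a constant C > 0 such that for all x > 0, |Zⁿ(1/φ)(x)| ≤ C/x, where 1/φ is the function x ↦ (1+x)/x. -/

import Mathlib

/-- The conormal operator `Z g (x) = (x/(1+x)) g′(x)` on functions on `(0,∞)`. -/
noncomputable def Zop (g : ℝ → ℝ) : ℝ → ℝ :=
  fun x => (x / (1 + x)) * deriv g x

noncomputable def bb (k : ℕ) : ℝ → ℝ := fun x => (x * (1+x)^k)⁻¹

lemma bb_hasDerivAt (k : ℕ) {x : ℝ} (hx : 0 < x) :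
    HasDerivAt (bb k)
      (-((1:ℝ) * (1+x)^k + x * ((k:ℝ)*(1+x)^(k-1)*1)) / (x*(1+x)^k)^2) x := by
  have h1p : (0:ℝ) < 1 + x := by linarith
  have hne : x * (1+x)^k ≠ 0 := by positivity
  have h1 : HasDerivAt (fun y : ℝ => 1 + y) 1 x := (hasDerivAt_id x).const_add 1
  have hu : HasDerivAt (fun y : ℝ => y * (1+y)^k)
      ((1:ℝ) * (1+x)^k + x * ((k:ℝ)*(1+x)^(k-1)*1)) x := (hasDerivAt_id x).mul (h1.pow k)
  exact hu.inv hne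

lemma Zop_bb (k : ℕ) {x : ℝ} (hx : 0 < x) :
    Zop (bb k) x = (-((k:ℝ)+1)) * bb (k+1) x + (k:ℝ) * bb (k+2) x := by
  have h1p : (0:ℝ) < 1 + x := by linarith
  have hne : x ≠ 0 := ne_of_gt hx
  have hne1 : (1+x) ≠ 0 := ne_of_gt h1p
  have hd := (bb_hasDerivAt k hx).deriv
  unfold Zop
  rw [hd]
  unfold bb
  cases k with
  | zero => field_simp; ring
  | succ m =>
      simp only [Nat.add_sub_cancel, Nat.cast_add, Nat.cast_one]
      field_simp
      ring

lemma rep_step {g : ℝ → ℝ} {N : ℕ} {c : ℕ → ℝ}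
    (h0 : ∀ k, N ≤ k → c k = 0)
    (hg : ∀ x, 0 < x → g x = ∑ k ∈ Finset.range N, c k * bb k x) :
    ∃ c' : ℕ → ℝ, (∀ k, N + 2 ≤ k → c' k = 0) ∧
      ∀ x, 0 < x → Zop g x = ∑ k ∈ Finset.range (N+2), c' k * bb k x := by
  classical
  set c₁ : ℕ → ℝ := fun j => match j with
    | 0 => 0
    | j+1 => -((j:ℝ)+1) * c j with hc₁
  set c₂ : ℕ → ℝ := fun j => match j with
    | 0 => 0
    | 1 => 0
    | j+2 => (j:ℝ) * c j with hc₂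
  refine ⟨fun j => c₁ j + c₂ j, ?_, ?_⟩
  · intro k hk
    obtain ⟨m, rfl⟩ : ∃ m, k = m + 2 := ⟨k - 2, by omega⟩
    have e1 : c (m+1) = 0 := h0 _ (by omega)
    have e2 : c m = 0 := h0 _ (by omega)
    simp [hc₁, hc₂, e1, e2]
  · intro x hx
    have hderiv : ∀ k : ℕ, HasDerivAt (fun y => c k * bb k y)
        (c k * (-((1:ℝ) * (1+x)^k + x * ((k:ℝ)*(1+x)^(k-1)*1)) / (x*(1+x)^k)^2)) x :=
      fun k => (bb_hasDerivAt k hx).const_mul (c k)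
    have hsum : HasDerivAt (fun y => ∑ k ∈ Finset.range N, c k * bb k y)
        (∑ k ∈ Finset.range N,
          c k * (-((1:ℝ) * (1+x)^k + x * ((k:ℝ)*(1+x)^(k-1)*1)) / (x*(1+x)^k)^2)) x :=
      HasDerivAt.fun_sum (fun k _ => hderiv k)
    have heq : g =ᶠ[nhds x] fun y => ∑ k ∈ Finset.range N, c k * bb k y :=
      Filter.eventuallyEq_of_mem (isOpen_Ioi.mem_nhds hx) (fun y hy => hg y hy)
    have hdg : deriv g x = ∑ k ∈ Finset.range N,
        c k * (-((1:ℝ) * (1+x)^k + x * ((k:ℝ)*(1+x)^(k-1)*1)) / (x*(1+x)^k)^2) := by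
      rw [heq.deriv_eq, hsum.deriv]
    have hZ : Zop g x = ∑ k ∈ Finset.range N, c k * Zop (bb k) x := by
      unfold Zop
      rw [hdg, Finset.mul_sum]
      refine Finset.sum_congr rfl fun k _ => ?_
      rw [(bb_hasDerivAt k hx).deriv]
      ring
    rw [hZ]
    have hZk : ∀ k ∈ Finset.range N, c k * Zop (bb k) x =
        (-((k:ℝ)+1) * c k) * bb (k+1) x + ((k:ℝ) * c k) * bb (k+2) x := by
      intro k _
      rw [Zop_bb k hx]; ring
    rw [Finset.sum_congr rfl hZk, Finset.sum_add_distrib]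
    have hsplit : ∑ k ∈ Finset.range (N+2), (c₁ k + c₂ k) * bb k x =
        (∑ k ∈ Finset.range (N+2), c₁ k * bb k x)
        + ∑ k ∈ Finset.range (N+2), c₂ k * bb k x := by
      rw [← Finset.sum_add_distrib]
      exact Finset.sum_congr rfl fun k _ => by ring
    rw [hsplit]
    congr 1
    · rw [Finset.sum_range_succ' (fun j => c₁ j * bb j x) (N+1)]
      have : c₁ 0 * bb 0 x = 0 := by simp [hc₁]
      rw [this, add_zero, Finset.sum_range_succ]
      have : c₁ (N+1) * bb (N+1) x = 0 := by simp [hc₁, h0 N le_rfl]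
      rw [this, add_zero]
    · rw [Finset.sum_range_succ' (fun j => c₂ j * bb j x) (N+1)]
      have h00 : c₂ 0 * bb 0 x = 0 := by simp [hc₂]
      rw [h00, add_zero]
      rw [Finset.sum_range_succ' (fun j => c₂ (j+1) * bb (j+1) x) N]
      have h11 : c₂ 1 * bb 1 x = 0 := by simp [hc₂]
      rw [h11, add_zero]

lemma rep_all : ∀ n : ℕ, 1 ≤ n → ∃ (N : ℕ) (c : ℕ → ℝ),
    (∀ k, N ≤ k → c k = 0) ∧
    ∀ x, 0 < x → Zop^[n] (fun y => (1 + y) / y) x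
      = ∑ k ∈ Finset.range N, c k * bb k x := by
  intro n hn
  induction n, hn using Nat.le_induction with
  | base =>
      refine ⟨2, fun k => if k = 1 then -1 else 0, ?_, ?_⟩
      · intro k hk; simp [Nat.ne_of_gt (by omega : 1 < k)]
      · intro x hx
        have hne : x ≠ 0 := ne_of_gt hx
        have hd : HasDerivAt (fun y : ℝ => (1 + y) / y)
            ((1 * x - (1 + x) * 1) / x ^ 2) x :=
          ((hasDerivAt_id x).const_add 1).div (hasDerivAt_id x) hne
        simp only [Function.iterate_one]
        unfold Zop
        rw [hd.deriv]
        simp only [Finset.sum_range_succ, Finset.sum_range_one]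
        unfold bb
        have h1p : (0:ℝ) < 1 + x := by linarith
        norm_num
        field_simp
  | succ m hm ih =>
      obtain ⟨N, c, h0, hg⟩ := ih
      obtain ⟨c', h0', hg'⟩ := rep_step h0 hg
      exact ⟨N + 2, c', h0', fun x hx => by
        rw [Function.iterate_succ_apply']; exact hg' x hx⟩

/-- Iterated conormal derivatives of `1/φ = (1+x)/x` are bounded by `C/x`. -/
theorem stmt17 :
    ∀ n : ℕ, 1 ≤ n → ∃ C > (0 : ℝ), ∀ x : ℝ, 0 < x →
      |Zop^[n] (fun y => (1 + y) / y) x| ≤ C / x := by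
  intro n hn
  obtain ⟨N, c, _, hg⟩ := rep_all n hn
  refine ⟨(∑ k ∈ Finset.range N, |c k|) + 1, by positivity, ?_⟩
  intro x hx
  rw [hg x hx]
  have hbb : ∀ k : ℕ, |bb k x| ≤ 1 / x := by
    intro k
    have h1p : (0:ℝ) < 1 + x := by linarith
    have hpos : 0 < x * (1+x)^k := by positivity
    have : bb k x ≤ 1 / x := by
      unfold bb
      rw [one_div]
      exact inv_anti₀ hx
        (by nlinarith [one_le_pow₀ (by linarith : (1:ℝ) ≤ 1 + x) (n := k)])
    rw [abs_of_pos (by unfold bb; positivity)]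
    exact this
  calc |∑ k ∈ Finset.range N, c k * bb k x|
      ≤ ∑ k ∈ Finset.range N, |c k * bb k x| := Finset.abs_sum_le_sum_abs _ _
    _ ≤ ∑ k ∈ Finset.range N, |c k| * (1/x) := by
        refine Finset.sum_le_sum fun k _ => ?_
        rw [abs_mul]
        exact mul_le_mul_of_nonneg_left (hbb k) (abs_nonneg _)
    _ = (∑ k ∈ Finset.range N, |c k|) * (1/x) := by rw [← Finset.sum_mul]
    _ ≤ ((∑ k ∈ Finset.range N, |c k|) + 1) * (1/x) := by
        have : (0:ℝ) < 1/x := by positivity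
        nlinarith
    _ = ((∑ k ∈ Finset.range N, |c k|) + 1) / x := by ring
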